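/- arXiv:2404.02232 — 4 statements merged into one kernel-verified Lean document; each statement's English description precedes it below -/
import Mathlib

section
/- Let f : Σ* → ℕ be a star-free ℕ-polyregular function. Then there exists s ≥ 1 such that for every pumping pattern q : ℕ^p → Σ*, there exists a natural binomial function F : ℕ^p → ℕ with f(q(x₁+s, …, x_p+s)) = F(x₁,…,x_p) for all (x₁,…,x_p) ∈ ℕ^p. -/
open scoped BigOperators Classical

namespace NRatSeries

/-- All ways to split a word into a prefix and a suffix. -/
def splits {A : Type} (w : List A) : List (List A × List A) :=
  (List.range (w.length + 1)).map (fun i => (w.take i, w.drop i))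

/-- All decompositions of `w` into `n` (possibly empty) consecutive factors. -/
def decomps {A : Type} : ℕ → List A → List (List (List A))
  | 0, w => if w.isEmpty then [[]] else []
  | n+1, w => (splits w).flatMap (fun p => (decomps n p.2).map (fun l => p.1 :: l))

/-- The data defining a (ℤ-valued) polyregular computation of degree `d`:
a finite monoid `M`, a monoid morphism `μ` from words to `M`,
and a production function `π`. -/
structure PolyRegData (A : Type) (d : ℕ) where
  M : Type
  [mon : Monoid M]
  [fin : Fintype M]
  μ : List A → M
  π : (Fin (d + 1) → M) → ℤ
  map_nil : μ [] = 1
  map_append : ∀ u v : List A, μ (u ++ v) = μ u * μ v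

attribute [instance] PolyRegData.mon PolyRegData.fin

/-- `D` computes `f` if `f w` is the sum, over all decompositions of `w`
into `d+1` factors, of `π` applied to the images of the factors under `μ`. -/
def PolyRegData.Computes {A : Type} {d : ℕ} (D : PolyRegData A d) (f : List A → ℤ) : Prop :=
  ∀ w : List A,
    f w = ((decomps (d + 1) w).map (fun l => D.π (fun i => D.μ (l.getD i [])))).sum

/-- The production function takes values in ℕ. -/
def PolyRegData.NatOutput {A : Type} {d : ℕ} (D : PolyRegData A d) : Prop :=
  ∀ v, 0 ≤ D.π v

/-- The monoid is aperiodic. -/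
def PolyRegData.AperiodicMonoid {A : Type} {d : ℕ} (D : PolyRegData A d) : Prop :=
  ∀ x : D.M, ∃ n : ℕ, x ^ (n + 1) = x ^ n

/-- ℤ-polyregular of degree at most `d`. -/
def ZPolyD {A : Type} (d : ℕ) (f : List A → ℤ) : Prop :=
  ∃ D : PolyRegData A d, D.Computes f

/-- ℕ-polyregular of degree at most `d`. -/
def NPolyD {A : Type} (d : ℕ) (f : List A → ℤ) : Prop :=
  ∃ D : PolyRegData A d, D.Computes f ∧ D.NatOutput

/-- star-free ℤ-polyregular of degree at most `d`. -/
def ZSFD {A : Type} (d : ℕ) (f : List A → ℤ) : Prop :=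
  ∃ D : PolyRegData A d, D.Computes f ∧ D.AperiodicMonoid

/-- star-free ℕ-polyregular of degree at most `d`. -/
def NSFD {A : Type} (d : ℕ) (f : List A → ℤ) : Prop :=
  ∃ D : PolyRegData A d, D.Computes f ∧ D.NatOutput ∧ D.AperiodicMonoid

def ZPoly {A : Type} (f : List A → ℤ) : Prop := ∃ d, ZPolyD d f
def NPoly {A : Type} (f : List A → ℤ) : Prop := ∃ d, NPolyD d f
def ZSF {A : Type} (f : List A → ℤ) : Prop := ∃ d, ZSFD d f
def NSF {A : Type} (f : List A → ℤ) : Prop := ∃ d, NSFD d f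

/-- A function on words is commutative if it is invariant under permutations
of its input, i.e. only depends on the letter counts. -/
def Commutes {A : Type} (f : List A → ℤ) : Prop :=
  ∀ u v : List A, u.Perm v → f u = f v

/-- The word `η 0 ^ (x 0) ⋯ η (k-1) ^ (x (k-1))`. -/
def wordOf {A : Type} {k : ℕ} (η : Fin k → A) (x : Fin k → ℕ) : List A :=
  (List.finRange k).flatMap (fun i => List.replicate (x i) (η i))

/-- `g` represents the polynomial `P`. -/
def Represents {A : Type} {k : ℕ} (g : List A → ℤ) (P : MvPolynomial (Fin k) ℤ) : Prop :=
  ∃ η : Fin k → A, ∀ x : Fin k → ℕ,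
    g (wordOf η x) = MvPolynomial.eval (fun i => (x i : ℤ)) P

/-- `g` represents the rational polynomial `P`. -/
def RepresentsQ {A : Type} {k : ℕ} (g : List A → ℤ) (P : MvPolynomial (Fin k) ℚ) : Prop :=
  ∃ η : Fin k → A, ∀ x : Fin k → ℕ,
    (g (wordOf η x) : ℚ) = MvPolynomial.eval (fun i => (x i : ℚ)) P

/-- `α` is (the exponent vector of) a maximal monomial of `P` for the
divisibility preorder on monomials. -/
def MaxMonomial {k : ℕ} (P : MvPolynomial (Fin k) ℤ) (α : Fin k →₀ ℕ) : Prop :=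
  α ∈ P.support ∧ ∀ β ∈ P.support, α ≤ β → β = α

/-- Partial substitution of natural numbers for some of the variables. -/
noncomputable def restrict {k : ℕ} (ν : Fin k → Option ℕ) (P : MvPolynomial (Fin k) ℤ) :
    MvPolynomial (Fin k) ℤ :=
  MvPolynomial.bind₁
    (fun i => (ν i).elim (MvPolynomial.X i) (fun n => MvPolynomial.C (n : ℤ))) P

noncomputable def restrictQ {k : ℕ} (ν : Fin k → Option ℕ) (P : MvPolynomial (Fin k) ℚ) :
    MvPolynomial (Fin k) ℚ :=
  MvPolynomial.bind₁
    (fun i => (ν i).elim (MvPolynomial.X i) (fun n => MvPolynomial.C (n : ℚ))) P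

/-- `PolyStrNNeg`: every maximal monomial of every partial evaluation of `P`
at natural numbers has a non-negative coefficient. -/
def PolyStrNNeg {k : ℕ} (P : MvPolynomial (Fin k) ℤ) : Prop :=
  ∀ (ν : Fin k → Option ℕ) (α : Fin k →₀ ℕ),
    MaxMonomial (restrict ν P) α → 0 ≤ (restrict ν P).coeff α

/-- The translation `τ_K(P) = P(X₁ + K, …, X_k + K)`. -/
noncomputable def translate {k : ℕ} (K : ℕ) (P : MvPolynomial (Fin k) ℤ) :
    MvPolynomial (Fin k) ℤ :=
  MvPolynomial.bind₁ (fun i => MvPolynomial.X i + MvPolynomial.C (K : ℤ)) P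

/-- The discrete derivative `Δ_K(P) = τ_K(P) - P`. -/
noncomputable def delta {k : ℕ} (K : ℕ) (P : MvPolynomial (Fin k) ℤ) :
    MvPolynomial (Fin k) ℤ := translate K P - P

/-- `u ^ n` as concatenation. -/
def wpow {A : Type} (u : List A) (n : ℕ) : List A := (List.replicate n u).flatten

/-- A pumping pattern `q(x₁,…,x_p) = α₀ u₁^{x₁} α₁ ⋯ u_p^{x_p} α_p`. -/
def IsPumping {A : Type} {p : ℕ} (q : (Fin p → ℕ) → List A) : Prop :=
  ∃ (α : Fin (p + 1) → List A) (u : Fin p → List A),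
    ∀ x : Fin p → ℕ,
      q x = α 0 ++ ((List.finRange p).map (fun i => wpow (u i) (x i) ++ α i.succ)).flatten

/-- A natural binomial function: an ℕ-linear combination of products of
simple binomial functions `x ↦ binom (x - ℓ) k` (with truncated subtraction). -/
def IsNatBinomFun {p : ℕ} (F : (Fin p → ℕ) → ℕ) : Prop :=
  ∃ (n : ℕ) (c : Fin n → ℕ) (a b : Fin n → Fin p → ℕ),
    ∀ x : Fin p → ℕ, F x = ∑ i, c i * ∏ j, Nat.choose (x j - a i j) (b i j)

/-- The binomial monomial `pbinom (X_j - ℓ, m) = (X_j-ℓ)(X_j-ℓ-1)⋯(X_j-ℓ-m+1)/m!`. -/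
noncomputable def pbinom {k : ℕ} (j : Fin k) (ℓ m : ℕ) : MvPolynomial (Fin k) ℚ :=
  MvPolynomial.C ((m.factorial : ℚ)⁻¹) *
    ∏ t ∈ Finset.range m,
      (MvPolynomial.X j - MvPolynomial.C (ℓ : ℚ) - MvPolynomial.C (t : ℚ))

/-- Integer binomial polynomial: a ℤ-linear combination of products of
binomial monomials. -/
def IsIntBinomPoly {k : ℕ} (P : MvPolynomial (Fin k) ℚ) : Prop :=
  ∃ (n : ℕ) (c : Fin n → ℤ) (a b : Fin n → Fin k → ℕ),
    P = ∑ i, MvPolynomial.C (c i : ℚ) * ∏ j, pbinom j (a i j) (b i j)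

/-- Natural binomial polynomial: an ℕ-linear combination of products of
binomial monomials. -/
def IsNatBinomPoly {k : ℕ} (P : MvPolynomial (Fin k) ℚ) : Prop :=
  ∃ (n : ℕ) (c : Fin n → ℕ) (a b : Fin n → Fin k → ℕ),
    P = ∑ i, MvPolynomial.C (c i : ℚ) * ∏ j, pbinom j (a i j) (b i j)

/-- Strongly natural binomial polynomial: every partial substitution of
natural numbers yields a natural binomial polynomial. -/
def IsStrongNatBinomPoly {k : ℕ} (P : MvPolynomial (Fin k) ℚ) : Prop :=
  ∀ ν : Fin k → Option ℕ, IsNatBinomPoly (restrictQ ν P)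

/-- Ultimately polynomial. -/
def UltimatelyPoly {A : Type} (f : List A → ℤ) : Prop :=
  ∃ N₀ : ℕ, ∀ (p : ℕ) (q : (Fin p → ℕ) → List A), IsPumping q →
    ∃ P : MvPolynomial (Fin p) ℚ, ∀ x : Fin p → ℕ, (∀ i, N₀ ≤ x i) →
      (f (q x) : ℚ) = MvPolynomial.eval (fun i => (x i : ℚ)) P

/-- `(k,ℕ)`-combinatorial. -/
def Combinatorial {A : Type} (k : ℕ) (f : List A → ℤ) : Prop :=
  ∃ ω : ℕ, ∀ q : (Fin k → ℕ) → List A, IsPumping q →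
    ∃ P : MvPolynomial (Fin k) ℚ, IsStrongNatBinomPoly P ∧
      ∀ x : Fin k → ℕ, (∀ i, 1 ≤ x i) →
        (f (q (fun i => ω * x i)) : ℚ) = MvPolynomial.eval (fun i => (x i : ℚ)) P

/-!
Aperiodicity gives one `N` with `m ^ e = m ^ N` for every `m` and every `e ≥ N`, so the image of a
factor of the pumped word depends on each exponent only through `min e N`. Cut the word into its
`d + 1` factors one cut at a time: a cut inside a block `u ^ e` at copy `m` leaves the exponents
`m` and `e - 1 - m`, and summing over `m` is a discrete convolution. By the hockey-stick and
Vandermonde identities this convolution preserves the shape `∑ binom(e - a, b) F(x)`, with `F`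
natural binomial and offsets `a ≤ (n + 1) N` for a word still to be cut `n` times. Translating all
exponents by `s > (d + 1) N` keeps every truncated subtraction in its exact range, so the result is
a natural binomial function on all of `ℕ^p`.
-/

namespace IsNatBinomFun

variable {p : ℕ} {F G : (Fin p → ℕ) → ℕ}

theorem congr (hF : IsNatBinomFun F) (h : ∀ x, F x = G x) : IsNatBinomFun G :=
  funext h ▸ hF

theorem const (c : ℕ) : IsNatBinomFun fun _ : Fin p → ℕ => c :=
  ⟨1, fun _ => c, 0, 0, by simp⟩

theorem of_isEmpty (F : (Fin 0 → ℕ) → ℕ) : IsNatBinomFun F :=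
  (const (F Fin.elim0)).congr fun x => by rw [Subsingleton.elim x Fin.elim0]

theorem add (hF : IsNatBinomFun F) (hG : IsNatBinomFun G) : IsNatBinomFun (F + G) := by
  obtain ⟨n₁, c₁, a₁, b₁, h₁⟩ := hF
  obtain ⟨n₂, c₂, a₂, b₂, h₂⟩ := hG
  refine ⟨n₁ + n₂, Fin.append c₁ c₂, Fin.append a₁ a₂, Fin.append b₁ b₂, fun x => ?_⟩
  simp [h₁, h₂, Fin.sum_univ_add]

theorem sum {ι : Type*} (s : Finset ι) {F : ι → (Fin p → ℕ) → ℕ}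
    (h : ∀ i ∈ s, IsNatBinomFun (F i)) : IsNatBinomFun fun x => ∑ i ∈ s, F i x := by
  rw [← Finset.sum_fn]
  exact Finset.sum_induction _ _ (fun _ _ => add) (const 0) h

theorem const_mul (c : ℕ) (hF : IsNatBinomFun F) : IsNatBinomFun fun x => c * F x := by
  obtain ⟨n, c', a, b, h⟩ := hF
  exact ⟨n, fun i => c * c' i, a, b, fun x => by simp [h, Finset.mul_sum, mul_assoc]⟩

theorem choose_mul_tail (a b : ℕ) (hF : IsNatBinomFun F) :
    IsNatBinomFun fun x : Fin (p + 1) → ℕ => (x 0 - a).choose b * F (Fin.tail x) := by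
  obtain ⟨n, c, a', b', h⟩ := hF
  refine ⟨n, c, fun i => Fin.cons a (a' i), fun i => Fin.cons b (b' i), fun x => ?_⟩
  simp only [h, Finset.mul_sum, Fin.prod_univ_succ, Fin.cons_zero, Fin.cons_succ, Fin.tail]
  exact Finset.sum_congr rfl fun i _ => by ring

theorem add_choose_mul_tail {a k : ℕ} (hak : a ≤ k) (b : ℕ) (hF : IsNatBinomFun F) :
    IsNatBinomFun fun x : Fin (p + 1) → ℕ => (x 0 + k - a).choose b * F (Fin.tail x) := by
  refine (sum (Finset.HasAntidiagonal.antidiagonal b) fun ij _ =>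
    (hF.choose_mul_tail 0 ij.1).const_mul ((k - a).choose ij.2)).congr fun x => ?_
  rw [Nat.add_sub_assoc hak, Nat.add_choose_eq, Finset.sum_mul]
  exact Finset.sum_congr rfl fun ij _ => by simp only [Nat.sub_zero]; ring

end IsNatBinomFun

theorem sum_range_choose_eq_choose_succ (K j : ℕ) :
    ∑ k ∈ Finset.range K, k.choose j = K.choose (j + 1) := by
  induction K with
  | zero => simp
  | succ K ih => rw [Finset.sum_range_succ, ih, Nat.choose_succ_succ, add_comm]

/-- Sums `∑ binom(e - a, b) F(x)` with all offsets `a ≤ E`: for `e ≥ E` no subtraction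
truncates, so these are closed under the hockey-stick and Vandermonde identities. -/
inductive IsBinomForm {p : ℕ} (E : ℕ) : (ℕ → (Fin p → ℕ) → ℕ) → Prop
  | choose_mul (a b : ℕ) (ha : a ≤ E) {F : (Fin p → ℕ) → ℕ} (hF : IsNatBinomFun F) :
      IsBinomForm E fun e x => (e - a).choose b * F x
  | zero : IsBinomForm E 0
  | add {Φ Ψ} : IsBinomForm E Φ → IsBinomForm E Ψ → IsBinomForm E (Φ + Ψ)

namespace IsBinomForm

variable {p E : ℕ} {Φ : ℕ → (Fin p → ℕ) → ℕ}

theorem congr {Ψ : ℕ → (Fin p → ℕ) → ℕ} (h : IsBinomForm E Φ) (hΦΨ : ∀ e x, Φ e x = Ψ e x) :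
    IsBinomForm E Ψ :=
  funext (fun e => funext (hΦΨ e)) ▸ h

theorem sum {ι : Type*} (s : Finset ι) {Φ : ι → ℕ → (Fin p → ℕ) → ℕ}
    (h : ∀ i ∈ s, IsBinomForm E (Φ i)) : IsBinomForm E fun e x => ∑ i ∈ s, Φ i e x := by
  simp only [← Finset.sum_apply]
  exact Finset.sum_induction _ _ (fun _ _ => add) zero h

theorem mono {E' : ℕ} (hE : E ≤ E') (h : IsBinomForm E Φ) : IsBinomForm E' Φ := by
  induction h with
  | choose_mul a b ha hF => exact choose_mul a b (ha.trans hE) hF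
  | zero => exact zero
  | add _ _ ih₁ ih₂ => exact ih₁.add ih₂

theorem of_isNatBinomFun {F : (Fin p → ℕ) → ℕ} (hF : IsNatBinomFun F) :
    IsBinomForm E fun _ x => F x :=
  (choose_mul 0 0 (Nat.zero_le E) hF).congr fun e x => by simp

theorem comp_sub (c : ℕ) (h : IsBinomForm E Φ) : IsBinomForm (E + c) fun e x => Φ (e - c) x := by
  induction h with
  | choose_mul a b ha hF =>
      exact (choose_mul (c + a) b (by omega) hF).congr fun e x => by simp only [Nat.sub_sub]
  | zero => exact zero
  | add _ _ ih₁ ih₂ => exact ih₁.add ih₂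

/-- Hockey stick: `∑_{k < e - E} binom(E + k - a, b) = ∑ binom(E - a, i) binom(e - E, j + 1)`,
the sum running over `i + j = b`. -/
theorem sum_range_sub (h : IsBinomForm E Φ) :
    IsBinomForm E fun e x => ∑ k ∈ Finset.range (e - E), Φ (E + k) x := by
  induction h with
  | @choose_mul a b ha F hF =>
      refine (sum (Finset.HasAntidiagonal.antidiagonal b) fun ij _ =>
        choose_mul E (ij.2 + 1) le_rfl (hF.const_mul ((E - a).choose ij.1))).congr
        fun e x => ?_
      have hk : ∀ k, E + k - a = (E - a) + k := fun k => by omega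
      simp only [hk, Nat.add_choose_eq, Finset.sum_mul]
      rw [Finset.sum_comm]
      refine Finset.sum_congr rfl fun ij _ => ?_
      rw [← sum_range_choose_eq_choose_succ, Finset.sum_mul]
      exact Finset.sum_congr rfl fun k _ => by ring
  | zero => exact zero.congr fun e x => by simp
  | add _ _ ih₁ ih₂ =>
      exact (ih₁.add ih₂).congr fun e x => by simp [Finset.sum_add_distrib]

theorem comp_add {k : ℕ} (hk : E ≤ k) (h : IsBinomForm E Φ) :
    IsNatBinomFun fun x : Fin (p + 1) → ℕ => Φ (x 0 + k) (Fin.tail x) := by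
  induction h with
  | choose_mul a b ha hF => exact hF.add_choose_mul_tail (ha.trans hk) b
  | zero => exact IsNatBinomFun.const 0
  | add _ _ ih₁ ih₂ => exact ih₁.add ih₂

end IsBinomForm

theorem sum_range_min_eq {β : Type*} [AddCommMonoid β] (g : ℕ → ℕ → β) {c e : ℕ} (hce : c ≤ e) :
    ∑ m ∈ Finset.range e, g (min m c) (e - (m + 1))
      = ∑ m ∈ Finset.range c, g m (e - (m + 1)) + ∑ k ∈ Finset.range (e - c), g c k := by
  obtain ⟨K, rfl⟩ := Nat.exists_eq_add_of_le hce
  rw [Finset.sum_range_add, Nat.add_sub_cancel_left, ← Finset.sum_range_reflect (g c) K]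
  congr 1
  · refine Finset.sum_congr rfl fun m hm => ?_
    rw [min_eq_left (Finset.mem_range.1 hm).le]
  · refine Finset.sum_congr rfl fun k hk => ?_
    have := Finset.mem_range.1 hk
    rw [min_eq_right (by omega)]
    congr 1
    omega

def IsBinomFamily {p : ℕ} (E : ℕ) (Φ : ℕ → (Fin p → ℕ) → ℕ) : Prop :=
  (∀ e, IsNatBinomFun (Φ e)) ∧ ∃ Φ', IsBinomForm E Φ' ∧ ∀ e, E ≤ e → Φ e = Φ' e

namespace IsBinomFamily

variable {p E : ℕ} {Φ Ψ : ℕ → (Fin p → ℕ) → ℕ}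

theorem slice (h : IsBinomFamily E Φ) (e : ℕ) : IsNatBinomFun (Φ e) :=
  h.1 e

theorem congr (h : IsBinomFamily E Φ) (hΦΨ : ∀ e x, Φ e x = Ψ e x) : IsBinomFamily E Ψ :=
  funext (fun e => funext (hΦΨ e)) ▸ h

theorem of_eq_of_le {E' : ℕ} (h : IsBinomFamily E Φ) (hE : E ≤ E')
    (hslice : ∀ e < E', IsNatBinomFun (Ψ e)) (heq : ∀ e, E' ≤ e → Ψ e = Φ e) :
    IsBinomFamily E' Ψ := by
  obtain ⟨hΦ, Φ', hform, hΦ'⟩ := h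
  refine ⟨fun e => ?_, Φ', hform.mono hE, fun e he => (heq e he).trans (hΦ' e (hE.trans he))⟩
  rcases lt_or_ge e E' with he | he
  · exact hslice e he
  · exact heq e he ▸ hΦ e

theorem mono {E' : ℕ} (hE : E ≤ E') (h : IsBinomFamily E Φ) : IsBinomFamily E' Φ :=
  h.of_eq_of_le hE (fun e _ => h.slice e) fun _ _ => rfl

theorem add (hΦ : IsBinomFamily E Φ) (hΨ : IsBinomFamily E Ψ) : IsBinomFamily E (Φ + Ψ) := by
  obtain ⟨hΦ, Φ', hΦform, hΦ'⟩ := hΦ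
  obtain ⟨hΨ, Ψ', hΨform, hΨ'⟩ := hΨ
  exact ⟨fun e => (hΦ e).add (hΨ e), Φ' + Ψ', hΦform.add hΨform,
    fun e he => by simp only [Pi.add_apply, hΦ' e he, hΨ' e he]⟩

theorem zero : IsBinomFamily E (0 : ℕ → (Fin p → ℕ) → ℕ) :=
  ⟨fun _ => IsNatBinomFun.const 0, 0, IsBinomForm.zero, fun _ _ => rfl⟩

theorem sum {ι : Type*} (s : Finset ι) {Φ : ι → ℕ → (Fin p → ℕ) → ℕ}
    (h : ∀ i ∈ s, IsBinomFamily E (Φ i)) : IsBinomFamily E fun e x => ∑ i ∈ s, Φ i e x := by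
  simp only [← Finset.sum_apply]
  exact Finset.sum_induction _ _ (fun _ _ => add) zero h

theorem of_isNatBinomFun {F : (Fin p → ℕ) → ℕ} (hF : IsNatBinomFun F) :
    IsBinomFamily E fun _ x => F x :=
  ⟨fun _ => hF, _, IsBinomForm.of_isNatBinomFun hF, fun _ _ => rfl⟩

theorem comp_min {c : ℕ} {Θ : ℕ → (Fin p → ℕ) → ℕ} (hΘ : ∀ d ≤ c, IsNatBinomFun (Θ d)) :
    IsBinomFamily c fun e x => Θ (min e c) x :=
  (of_isNatBinomFun (hΘ c le_rfl)).of_eq_of_le (E := 0) (Nat.zero_le c)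
    (fun e _ => hΘ _ (min_le_right e c)) fun e he => by simp only [min_eq_right he]

theorem comp_sub (c : ℕ) (h : IsBinomFamily E Φ) :
    IsBinomFamily (E + c) fun e x => Φ (e - c) x := by
  obtain ⟨hΦ, Φ', hform, hΦ'⟩ := h
  exact ⟨fun e => hΦ (e - c), _, hform.comp_sub c, fun e he => hΦ' (e - c) (by omega)⟩

theorem sum_range (h : IsBinomFamily E Φ) :
    IsBinomFamily E fun e x => ∑ k ∈ Finset.range e, Φ k x := by
  obtain ⟨hΦ, Φ', hform, hΦ'⟩ := h
  refine ⟨fun e => IsNatBinomFun.sum _ fun k _ => hΦ k, _,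
    (IsBinomForm.of_isNatBinomFun (IsNatBinomFun.sum (Finset.range E) fun k _ => hΦ k)).add
      hform.sum_range_sub, fun e he => funext fun x => ?_⟩
  obtain ⟨K, rfl⟩ := Nat.exists_eq_add_of_le he
  simp only [Finset.sum_range_add, Pi.add_apply, Nat.add_sub_cancel_left]
  congr 1
  exact Finset.sum_congr rfl fun k _ => by rw [hΦ' (E + k) (Nat.le_add_right E k)]

theorem sum_range_min {c : ℕ} {Ψ : ℕ → ℕ → (Fin p → ℕ) → ℕ}
    (h : ∀ d ≤ c, IsBinomFamily E (Ψ d)) :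
    IsBinomFamily (E + c) fun e x => ∑ m ∈ Finset.range e, Ψ (min m c) (e - (m + 1)) x := by
  have hhead : IsBinomFamily (E + c) fun e x => ∑ m ∈ Finset.range c, Ψ m (e - (m + 1)) x :=
    sum _ fun m hm => ((h m (Finset.mem_range.1 hm).le).comp_sub (m + 1)).mono
      (by have := Finset.mem_range.1 hm; omega)
  refine (hhead.add ((h c le_rfl).sum_range.comp_sub c)).of_eq_of_le le_rfl
    (fun e _ => IsNatBinomFun.sum _ fun m _ => (h _ (min_le_right m c)).slice _)
    fun e he => funext fun x => sum_range_min_eq (fun d k => Ψ d k x) (by omega)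

theorem comp_add {k : ℕ} (hk : E ≤ k) (h : IsBinomFamily E Φ) :
    IsNatBinomFun fun x : Fin (p + 1) → ℕ => Φ (x 0 + k) (Fin.tail x) := by
  obtain ⟨-, Φ', hform, hΦ'⟩ := h
  exact (hform.comp_add hk).congr fun x => by rw [hΦ' _ (by omega)]

end IsBinomFamily

section Words

variable {A M : Type} [Monoid M] {μ : List A → M}

variable (μ) in
/-- Recursive form of the sum over the decompositions of `w` into `n + 1` factors
(`cutSum_eq_sum_decomps`); the image of the first factor is premultiplied by `acc`. -/
def cutSum : ℕ → M → (List M → ℕ) → List A → ℕ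
  | 0, acc, κ, w => κ [acc * μ w]
  | n + 1, acc, κ, w =>
      ∑ i ∈ Finset.range (w.length + 1),
        cutSum n 1 (fun ms => κ ((acc * μ (w.take i)) :: ms)) (w.drop i)

theorem cutSum_append (hμ : ∀ u v, μ (u ++ v) = μ u * μ v) (n : ℕ) (acc : M)
    (κ : List M → ℕ) (a T : List A) :
    cutSum μ (n + 1) acc κ (a ++ T) =
      ∑ i ∈ Finset.range a.length,
          cutSum μ n 1 (fun ms => κ ((acc * μ (a.take i)) :: ms)) (a.drop i ++ T)
        + cutSum μ (n + 1) (acc * μ a) κ T := by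
  rw [cutSum, cutSum, List.length_append, add_assoc, Finset.sum_range_add]
  congr 1
  · refine Finset.sum_congr rfl fun i hi => ?_
    have hi := (Finset.mem_range.1 hi).le
    rw [List.take_append_of_le_length hi, List.drop_append_of_le_length hi]
  · refine Finset.sum_congr rfl fun i _ => ?_
    rw [List.take_append, List.drop_append, hμ, mul_assoc, Nat.add_sub_cancel_left,
      List.take_of_length_le (by omega), List.drop_of_length_le (by omega), List.nil_append]

theorem wpow_succ (u : List A) (n : ℕ) : wpow u (n + 1) = u ++ wpow u n := by
  simp [wpow, List.replicate_succ]

theorem map_wpow (hμ₁ : μ [] = 1) (hμ : ∀ u v, μ (u ++ v) = μ u * μ v) (u : List A) (n : ℕ) :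
    μ (wpow u n) = μ u ^ n := by
  induction n with
  | zero => simpa [wpow] using hμ₁
  | succ n ih => rw [wpow_succ, hμ, ih, pow_succ']

theorem cutSum_wpow_append (hμ : ∀ u v, μ (u ++ v) = μ u * μ v) (n e : ℕ) (acc : M)
    (κ : List M → ℕ) (u T : List A) :
    cutSum μ (n + 1) acc κ (wpow u e ++ T) =
      ∑ m ∈ Finset.range e, ∑ r ∈ Finset.range u.length,
          cutSum μ n 1 (fun ms => κ ((acc * μ u ^ m * μ (u.take r)) :: ms))
            (u.drop r ++ (wpow u (e - (m + 1)) ++ T))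
        + cutSum μ (n + 1) (acc * μ u ^ e) κ T := by
  induction e generalizing acc with
  | zero => simp [wpow]
  | succ e ih =>
      rw [wpow_succ, List.append_assoc, cutSum_append hμ, ih, Finset.sum_range_succ']
      simp only [pow_zero, mul_one, pow_succ', ← mul_assoc, zero_add, Nat.add_sub_cancel,
        Nat.add_sub_add_right]
      ac_rfl

def pattern {p : ℕ} (u β : Fin p → List A) (x : Fin p → ℕ) : List A :=
  ((List.finRange p).map fun i => wpow (u i) (x i) ++ β i).flatten

theorem pattern_succ {p : ℕ} (u β : Fin (p + 1) → List A) (x : Fin (p + 1) → ℕ) :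
    pattern u β x =
      wpow (u 0) (x 0) ++ (β 0 ++ pattern (Fin.tail u) (Fin.tail β) (Fin.tail x)) := by
  simp [pattern, List.finRange_succ, Fin.tail, Function.comp_def]

theorem map_pattern_congr (hμ₁ : μ [] = 1) (hμ : ∀ u v, μ (u ++ v) = μ u * μ v) {p : ℕ}
    (u β : Fin p → List A) {x y : Fin p → ℕ} (hxy : ∀ i, μ (u i) ^ x i = μ (u i) ^ y i) :
    μ (pattern u β x) = μ (pattern u β y) := by
  induction p with
  | zero => rfl
  | succ p ih =>
      rw [pattern_succ, pattern_succ, hμ, hμ, hμ, hμ, map_wpow hμ₁ hμ, map_wpow hμ₁ hμ, hxy,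
        ih (Fin.tail u) (Fin.tail β) (x := Fin.tail x) (y := Fin.tail y) fun i => hxy i.succ]

end Words

section Pumping

variable {A M : Type} [Monoid M] {μ : List A → M} {N s : ℕ}

theorem pow_min_eq_pow (hN : ∀ (m : M) e, N ≤ e → m ^ e = m ^ N) (m : M) (e : ℕ) :
    m ^ min e N = m ^ e := by
  rcases le_total e N with he | he
  · rw [min_eq_left he]
  · rw [min_eq_right he, hN m e he]

theorem isNatBinomFun_cutSum_pattern_succ {n p : ℕ} (hs : (n + 1) * N ≤ s)
    (hfam : ∀ (h u₀ α₀ : List A) (u β : Fin p → List A) (acc : M) (κ : List M → ℕ),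
      IsBinomFamily ((n + 1) * N) fun e x =>
        cutSum μ n acc κ (h ++ (wpow u₀ e ++ (α₀ ++ pattern u β (x · + s)))))
    (h : List A) (u β : Fin (p + 1) → List A) (acc : M) (κ : List M → ℕ) :
    IsNatBinomFun fun x => cutSum μ n acc κ (h ++ pattern u β (x · + s)) :=
  ((hfam h (u 0) (β 0) (Fin.tail u) (Fin.tail β) acc κ).comp_add hs).congr fun x => by
    rw [pattern_succ]
    rfl

theorem isBinomFamily_cutSum_zero (hμ₁ : μ [] = 1) (hμ : ∀ u v, μ (u ++ v) = μ u * μ v)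
    (hN : ∀ (m : M) e, N ≤ e → m ^ e = m ^ N) (hs : N ≤ s) {p : ℕ}
    (h u₀ α₀ : List A) (u β : Fin p → List A) (acc : M) (κ : List M → ℕ) :
    IsBinomFamily N fun e x =>
      cutSum μ 0 acc κ (h ++ (wpow u₀ e ++ (α₀ ++ pattern u β (x · + s)))) := by
  refine (IsBinomFamily.comp_min (c := N) (Θ := fun d _ =>
      κ [acc * (μ h * (μ u₀ ^ d * (μ α₀ * μ (pattern u β fun _ => s))))])
    fun _ _ => IsNatBinomFun.const _).congr fun e x => ?_
  have hpattern : μ (pattern u β fun _ => s) = μ (pattern u β (x · + s)) :=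
    map_pattern_congr hμ₁ hμ u β fun i => by rw [hN _ s hs, hN _ (x i + s) (by omega)]
  rw [cutSum, hμ, hμ, hμ, map_wpow hμ₁ hμ, pow_min_eq_pow hN, hpattern]

theorem isBinomFamily_cutSum_succ (hμ : ∀ u v, μ (u ++ v) = μ u * μ v)
    (hN : ∀ (m : M) e, N ≤ e → m ^ e = m ^ N) {n p : ℕ}
    (hfam : ∀ (h u₀ α₀ : List A) (u β : Fin p → List A) (acc : M) (κ : List M → ℕ),
      IsBinomFamily ((n + 1) * N) fun e x =>
        cutSum μ n acc κ (h ++ (wpow u₀ e ++ (α₀ ++ pattern u β (x · + s)))))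
    (hpattern : ∀ (h : List A) (u β : Fin p → List A) (acc : M) (κ : List M → ℕ),
      IsNatBinomFun fun x => cutSum μ (n + 1) acc κ (h ++ pattern u β (x · + s)))
    (h u₀ α₀ : List A) (u β : Fin p → List A) (acc : M) (κ : List M → ℕ) :
    IsBinomFamily ((n + 2) * N) fun e x =>
      cutSum μ (n + 1) acc κ (h ++ (wpow u₀ e ++ (α₀ ++ pattern u β (x · + s)))) := by
  have hhead := IsBinomFamily.sum (Finset.range h.length) fun i _ =>
    hfam (h.drop i) u₀ α₀ u β 1 fun ms => κ ((acc * μ (h.take i)) :: ms)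
  have hblock := IsBinomFamily.sum_range_min (c := N) fun d _ =>
    IsBinomFamily.sum (Finset.range u₀.length) fun r _ =>
      hfam (u₀.drop r) u₀ α₀ u β 1 fun ms => κ ((acc * μ h * μ u₀ ^ d * μ (u₀.take r)) :: ms)
  have htail := IsBinomFamily.comp_min (c := N) fun d _ =>
    hpattern α₀ u β (acc * μ h * μ u₀ ^ d) κ
  refine ((hhead.mono ?_).add ((hblock.mono ?_).add (htail.mono ?_))).congr fun e x => ?_
  · exact Nat.mul_le_mul_right N (by omega)
  · exact (by ring : (n + 1) * N + N = (n + 2) * N).le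
  · exact Nat.le_mul_of_pos_left N (by omega)
  · rw [cutSum_append hμ, cutSum_wpow_append hμ]
    simp only [pow_min_eq_pow hN]
    rfl

theorem isBinomFamily_cutSum (hμ₁ : μ [] = 1) (hμ : ∀ u v, μ (u ++ v) = μ u * μ v)
    (hN : ∀ (m : M) e, N ≤ e → m ^ e = m ^ N) {n : ℕ} (hs : (n + 1) * N ≤ s) (p : ℕ) :
    ∀ (h u₀ α₀ : List A) (u β : Fin p → List A) (acc : M) (κ : List M → ℕ),
      IsBinomFamily ((n + 1) * N) fun e x =>
        cutSum μ n acc κ (h ++ (wpow u₀ e ++ (α₀ ++ pattern u β (x · + s)))) := by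
  induction n generalizing p with
  | zero =>
      intro h u₀ α₀ u β acc κ
      simpa using isBinomFamily_cutSum_zero hμ₁ hμ hN (by simpa using hs) h u₀ α₀ u β acc κ
  | succ n ih =>
      have ih := ih ((Nat.mul_le_mul_right N (by omega)).trans hs)
      induction p with
      | zero => exact isBinomFamily_cutSum_succ hμ hN (ih 0) fun _ _ _ _ _ => .of_isEmpty _
      | succ p ihp =>
          exact isBinomFamily_cutSum_succ hμ hN (ih (p + 1))
            (isNatBinomFun_cutSum_pattern_succ hs ihp)

theorem isNatBinomFun_cutSum_pattern (hμ₁ : μ [] = 1) (hμ : ∀ u v, μ (u ++ v) = μ u * μ v)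
    (hN : ∀ (m : M) e, N ≤ e → m ^ e = m ^ N) {n : ℕ} (hs : (n + 1) * N ≤ s) (p : ℕ)
    (h : List A) (u β : Fin p → List A) (acc : M) (κ : List M → ℕ) :
    IsNatBinomFun fun x => cutSum μ n acc κ (h ++ pattern u β (x · + s)) := by
  cases p with
  | zero => exact .of_isEmpty _
  | succ p =>
      exact isNatBinomFun_cutSum_pattern_succ hs (isBinomFamily_cutSum hμ₁ hμ hN hs p) h u β acc κ

end Pumping

theorem sum_map_decomps_succ {A β : Type} [AddCommMonoid β] (g : List (List A) → β) (n : ℕ)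
    (w : List A) :
    ((decomps (n + 1) w).map g).sum =
      ∑ i ∈ Finset.range (w.length + 1),
        ((decomps n (w.drop i)).map fun l => g (w.take i :: l)).sum := by
  simp only [decomps, splits, List.flatMap, List.map_flatten, List.sum_flatten, List.map_map,
    Function.comp_def]
  rfl

theorem decomps_one {A : Type} (w : List A) : decomps 1 w = [[w]] := by
  simp [decomps, splits, List.range_succ, List.flatMap_append]

theorem List.modifyHead_one_mul {M : Type} [Monoid M] (l : List M) : l.modifyHead (1 * ·) = l := by
  cases l <;> simp

theorem cutSum_eq_sum_decomps {A M : Type} [Monoid M] (μ : List A → M) (n : ℕ) (acc : M)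
    (κ : List M → ℕ) (w : List A) :
    cutSum μ n acc κ w =
      ((decomps (n + 1) w).map fun l => κ ((l.map μ).modifyHead (acc * ·))).sum := by
  induction n generalizing acc κ w with
  | zero => simp [cutSum, decomps_one]
  | succ n ih =>
      rw [cutSum, sum_map_decomps_succ]
      simp only [ih, List.modifyHead_one_mul, List.map_cons, List.modifyHead_cons]

theorem PolyRegData.natCast_cutSum {A : Type} {d : ℕ} (D : PolyRegData A d) (hD : D.NatOutput)
    {g : List A → ℤ} (hg : D.Computes g) (w : List A) :
    (cutSum D.μ d 1 (fun ms => (D.π fun i => ms.getD i 1).toNat) w : ℤ) = g w := by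
  rw [hg w, cutSum_eq_sum_decomps, Nat.cast_list_sum, List.map_map]
  congr 1
  refine List.map_congr_left fun l _ => ?_
  simp only [Function.comp_apply, List.modifyHead_one_mul, Int.toNat_of_nonneg (hD _)]
  simp only [← D.map_nil, List.getD_map]

theorem exists_pow_eq_pow_of_le {M : Type} [Monoid M] [Finite M]
    (hM : ∀ m : M, ∃ n, m ^ (n + 1) = m ^ n) : ∃ N, ∀ (m : M) e, N ≤ e → m ^ e = m ^ N := by
  choose n hn using hM
  have hstable : ∀ m e, n m ≤ e → m ^ e = m ^ n m := fun m e he => by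
    induction e, he using Nat.le_induction with
    | base => rfl
    | succ e _ ih => rw [pow_succ, ih, ← pow_succ, hn]
  have := Fintype.ofFinite M
  refine ⟨Finset.univ.sup n, fun m e he => ?_⟩
  have hm : n m ≤ Finset.univ.sup n := Finset.le_sup (Finset.mem_univ m)
  rw [hstable m e (hm.trans he), hstable m _ hm]

theorem statement3_general {A : Type} (f : List A → ℕ)
    (hf : NSF (fun w => (f w : ℤ))) :
    ∃ s : ℕ, 1 ≤ s ∧
      ∀ (p : ℕ) (q : (Fin p → ℕ) → List A), IsPumping q →
        ∃ F : (Fin p → ℕ) → ℕ, IsNatBinomFun F ∧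
          ∀ x : Fin p → ℕ, f (q (fun i => x i + s)) = F x := by
  obtain ⟨d, D, hD, hnat, haper⟩ := hf
  obtain ⟨N, hN⟩ := exists_pow_eq_pow_of_le haper
  refine ⟨(d + 1) * N + 1, Nat.le_add_left 1 _, fun p q ⟨α, u, hq⟩ => ?_⟩
  refine ⟨_, isNatBinomFun_cutSum_pattern (n := d) D.map_nil D.map_append hN
    (Nat.le_add_right _ 1) p (α 0) u (Fin.tail α) 1 fun ms => (D.π fun i => ms.getD i 1).toNat,
    fun x => ?_⟩
  rw [hq]
  exact (Nat.cast_injective (D.natCast_cutSum hnat hD _)).symm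

/-- pumping a star-free ℕ-polyregular function along a pumping
pattern, with all variables translated by a suitable `s ≥ 1`, yields a natural
binomial function on all of `ℕ^p`. -/
theorem statement3 {A : Type} [Fintype A] (f : List A → ℕ)
    (hf : NSF (fun w => (f w : ℤ))) :
    ∃ s : ℕ, 1 ≤ s ∧
      ∀ (p : ℕ) (q : (Fin p → ℕ) → List A), IsPumping q →
        ∃ F : (Fin p → ℕ) → ℕ, IsNatBinomFun F ∧
          ∀ x : Fin p → ℕ, f (q (fun i => x i + s)) = F x :=
  statement3_general f hf

end NRatSeries
end

section
/- Let P ∈ ℕ[X₁,…,X_k] be a non-constant polynomial with natural-number coefficients and let K ∈ ℕ. Then Δ_K(P) := P(X₁+K,…,X_k+K) − P has all its coefficients non-negative and divisible by K; moreover, if K ≥ 1, every monomial whose exponent vector strictly divides (componentwise ≤ and not equal to) the exponent vector of some monomial of P appears with nonzero coefficient in Δ_K(P). -/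
open scoped BigOperators Classical

/-!
The translate of `X^β` is `∏ᵢ (Xᵢ + K)^{βᵢ}`, whose coefficient at `X^α` is
`∏ᵢ C(βᵢ, αᵢ) K^{βᵢ - αᵢ}`. This equals `1` at `α = β`, so the `α`-coefficient of `Δ_K(P)` is
`∑_{β ≠ α} P_β ∏ᵢ C(βᵢ, αᵢ) K^{βᵢ - αᵢ}`. For `β ≠ α` some `i` has `βᵢ ≠ αᵢ`: either
`βᵢ > αᵢ` and the factor `K^{βᵢ - αᵢ}` appears, or `βᵢ < αᵢ` and the binomial vanishes; so
every term is a non-negative multiple of `K`, and the term of `β` is positive when `α ≤ β`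
and `K ≥ 1`.
-/

open MvPolynomial Finset

namespace MvPolynomial

variable {σ R : Type*} [CommSemiring R]

theorem X_add_C_pow_eq_sum (i : σ) (c : R) (n : ℕ) :
    (X i + C c) ^ n =
      ∑ m ∈ range (n + 1), monomial (Finsupp.single i m) ((n.choose m : R) * c ^ (n - m)) := by
  rw [add_pow]
  refine sum_congr rfl fun m _ => ?_
  rw [X_pow_eq_monomial, ← C_pow, ← map_natCast C, mul_assoc, ← C_mul, mul_comm (monomial _ _),
    C_mul_monomial, mul_one, mul_comm]

variable [Fintype σ]

theorem coeff_prod_X_add_C_pow (c : R) (β : σ → ℕ) (α : σ →₀ ℕ) :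
    coeff α (∏ i, (X i + C c) ^ β i) = ∏ i, ((β i).choose (α i) : R) * c ^ (β i - α i) := by
  obtain ⟨α, rfl⟩ := Finsupp.equivFunOnFinite.symm.surjective α
  simp_rw [X_add_C_pow_eq_sum, prod_univ_sum, ← monomial_sum_prod, coeff_sum, coeff_monomial,
    ← Finsupp.equivFunOnFinite_symm_eq_sum, Finsupp.equivFunOnFinite.symm.injective.eq_iff,
    sum_ite_eq', Fintype.mem_piFinset, mem_range, Nat.lt_succ_iff, Finsupp.coe_equivFunOnFinite_symm]
  split_ifs with hαβ
  · rfl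
  · obtain ⟨i, hi⟩ := not_forall.mp hαβ
    refine (prod_eq_zero (mem_univ i) ?_).symm
    rw [Nat.choose_eq_zero_of_lt (not_le.mp hi), Nat.cast_zero, zero_mul]

theorem coeff_bind₁_X_add_C (c : R) (p : MvPolynomial σ R) (α : σ →₀ ℕ) :
    coeff α (bind₁ (fun i => X i + C c) p) =
      ∑ β ∈ p.support, p.coeff β * ∏ i, ((β i).choose (α i) : R) * c ^ (β i - α i) := by
  conv_lhs => rw [p.as_sum]
  simp only [map_sum, coeff_sum, bind₁_monomial, coeff_C_mul]
  refine sum_congr rfl fun β _ => ?_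
  rw [← coeff_prod_X_add_C_pow, prod_subset (subset_univ _)]
  intro i _ hi
  rw [Finsupp.notMem_support_iff.mp hi, pow_zero]

end MvPolynomial

namespace NRatSeries

variable {σ : Type*} [Fintype σ]

def translateCoeff (K : ℕ) (β α : σ →₀ ℕ) : ℕ :=
  ∏ i, (β i).choose (α i) * K ^ (β i - α i)

theorem translateCoeff_self (K : ℕ) (α : σ →₀ ℕ) : translateCoeff K α α = 1 := by
  simp [translateCoeff]

theorem dvd_translateCoeff (K : ℕ) {β α : σ →₀ ℕ} (h : β ≠ α) : K ∣ translateCoeff K β α := by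
  obtain ⟨i, hi⟩ := DFunLike.ne_iff.mp h
  refine dvd_trans ?_ (dvd_prod_of_mem _ (mem_univ i))
  rcases hi.lt_or_gt with hlt | hgt
  · rw [Nat.choose_eq_zero_of_lt hlt, zero_mul]
    exact dvd_zero K
  · exact dvd_mul_of_dvd_right (dvd_pow_self K (Nat.sub_ne_zero_of_lt hgt)) _

theorem translateCoeff_pos {K : ℕ} (hK : 0 < K) {β α : σ →₀ ℕ} (h : α ≤ β) :
    0 < translateCoeff K β α :=
  prod_pos fun i _ => mul_pos (Nat.choose_pos (h i)) (pow_pos hK _)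

variable {k : ℕ}

theorem coeff_translate (K : ℕ) (P : MvPolynomial (Fin k) ℤ) (α : Fin k →₀ ℕ) :
    (translate K P).coeff α = ∑ β ∈ P.support, P.coeff β * translateCoeff K β α := by
  rw [translate, coeff_bind₁_X_add_C]
  push_cast [translateCoeff]
  rfl

theorem coeff_delta (K : ℕ) (P : MvPolynomial (Fin k) ℤ) (α : Fin k →₀ ℕ) :
    (delta K P).coeff α = ∑ β ∈ P.support.erase α, P.coeff β * translateCoeff K β α := by
  rw [delta, coeff_sub, coeff_translate]
  by_cases hα : α ∈ P.support
  · rw [sum_erase_eq_sub hα, translateCoeff_self, Nat.cast_one, mul_one]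
  · rw [erase_eq_of_notMem hα, notMem_support_iff.mp hα, sub_zero]

theorem statement4_general {k : ℕ} (K : ℕ) (P : MvPolynomial (Fin k) ℤ)
    (hcoeff : ∀ α : Fin k →₀ ℕ, 0 ≤ P.coeff α) :
    (∀ α : Fin k →₀ ℕ,
      0 ≤ (delta K P).coeff α ∧ (K : ℤ) ∣ (delta K P).coeff α) ∧
    (1 ≤ K → ∀ α β : Fin k →₀ ℕ, β ∈ P.support → α ≤ β → α ≠ β →
      (delta K P).coeff α ≠ 0) := by
  have hterm : ∀ α β, 0 ≤ P.coeff β * translateCoeff K β α :=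
    fun α β => mul_nonneg (hcoeff β) (Nat.cast_nonneg _)
  refine ⟨fun α => ?_, fun hK α β hβ hαβ hne => ?_⟩
  · rw [coeff_delta]
    exact ⟨sum_nonneg fun β _ => hterm α β, dvd_sum fun β hβ =>
      (Int.natCast_dvd_natCast.mpr (dvd_translateCoeff K (ne_of_mem_erase hβ))).mul_left _⟩
  · rw [coeff_delta]
    have hβα : β ∈ P.support.erase α := mem_erase.mpr ⟨Ne.symm hne, hβ⟩
    have hpos : 0 < P.coeff β * translateCoeff K β α :=
      mul_pos ((hcoeff β).lt_of_ne' (mem_support_iff.mp hβ))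
        (Nat.cast_pos.mpr (translateCoeff_pos hK hαβ))
    exact (sum_pos' (fun γ _ => hterm α γ) ⟨β, hβα, hpos⟩).ne'

/-- for a non-constant `P ∈ ℕ[X₁,…,X_k]` and `K ∈ ℕ`, the
discrete derivative `Δ_K(P)` has non-negative coefficients all divisible by
`K`; moreover when `K ≥ 1`, every monomial strictly dividing some monomial of
`P` appears (with nonzero coefficient) in `Δ_K(P)`. -/
theorem statement4 {k : ℕ} (K : ℕ) (P : MvPolynomial (Fin k) ℤ)
    (hcoeff : ∀ α : Fin k →₀ ℕ, 0 ≤ P.coeff α)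
    (hnonconst : ∃ α ∈ P.support, α ≠ 0) :
    (∀ α : Fin k →₀ ℕ,
      0 ≤ (delta K P).coeff α ∧ (K : ℤ) ∣ (delta K P).coeff α) ∧
    (1 ≤ K → ∀ α β : Fin k →₀ ℕ, β ∈ P.support → α ≤ β → α ≠ β →
      (delta K P).coeff α ≠ 0) :=
  statement4_general K P hcoeff

end NRatSeries
end

section
/- Let P ∈ ℤ[X₁,…,X_k]. There exists K ∈ ℕ such that the following are equivalent: (1) P ∈ PolyStrNNeg; (2) for every partial assignment ν : {X₁,…,X_k} ⇀ ℕ, the polynomial τ_K(P|ν) has all coefficients non-negative; (3) for every partial assignment ν : {X₁,…,X_k} ⇀ {0,…,K}, the polynomial τ_K(P|ν) has all coefficients non-negative. -/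
open scoped BigOperators Classical

namespace NRatSeries

/-!
In `τ_K(P|ν)` a free variable `X i` becomes `X i + w i` with `w i = K`, and a fixed one becomes its
assigned value `w i`. So the coefficient of `X^γ` vanishes if `γ` involves a fixed variable, and is
otherwise `∑_{β ≥ γ} c_β (β choose γ) w^(β - γ)`. If `w i ≥ B = ∑ |c_β| 2^|β|` for all variables of
`P`, take the non-maximal `β₀` of largest weight `w^(β₀ - γ)` and a maximal `β₁ > β₀`: the term of
`β₁` is at least `B w^(β₀ - γ)`, which outweighs all non-maximal terms, so the coefficient is
non-negative once the maximal monomials of `P` are. A value below `B` is substituted first, which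
removes a variable; recursing over these finitely many substitutions gives `K`, and only uses
assignments bounded by `K`. Conversely, translation keeps the coefficient of a maximal monomial.
-/

section

open MvPolynomial

theorem _root_.Finset.sum_nonneg_of_maximal_dominant {α : Type*} [PartialOrder α] (S : Finset α)
    (t W a : α → ℤ) (B : ℤ) (hW : ∀ x ∈ S, 0 ≤ W x) (ha : ∀ x ∈ S, 0 ≤ a x)
    (hB : ∑ x ∈ S, a x ≤ B)
    (hmax : ∀ x, Maximal (· ∈ S) x → W x ≤ t x)
    (hlt : ∀ x ∈ S, ∀ y ∈ S, x < y → B * W x ≤ W y)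
    (hlow : ∀ x ∈ S, -(a x * W x) ≤ t x) :
    0 ≤ ∑ x ∈ S, t x := by
  rw [← Finset.sum_filter_add_sum_filter_not S (Maximal (· ∈ S))]
  set M := S.filter (Maximal (· ∈ S))
  set N := S.filter (¬ Maximal (· ∈ S) ·)
  have htM : ∀ x ∈ M, 0 ≤ t x := fun x hx =>
    (hW x (Finset.mem_filter.1 hx).1).trans (hmax x (Finset.mem_filter.1 hx).2)
  obtain hN | ⟨x₀, hx₀N, hx₀⟩ := N.eq_empty_or_nonempty.imp_right (N.exists_max_image W)
  · rw [hN, Finset.sum_empty, add_zero]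
    exact Finset.sum_nonneg htM
  obtain ⟨hx₀S, hx₀max⟩ := Finset.mem_filter.1 hx₀N
  obtain ⟨y, hxy, hy⟩ := S.exists_le_maximal hx₀S
  have hx₀y : x₀ < y := hxy.lt_of_ne fun h => hx₀max (h ▸ hy)
  -- the single maximal term `t y` outweighs all the non-maximal ones
  have hMy : B * W x₀ ≤ ∑ x ∈ M, t x :=
    calc B * W x₀ ≤ W y := hlt x₀ hx₀S y hy.1 hx₀y
      _ ≤ t y := hmax y hy
      _ ≤ ∑ x ∈ M, t x := Finset.single_le_sum htM (Finset.mem_filter.2 ⟨hy.1, hy⟩)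
  have hNx₀ : -(B * W x₀) ≤ ∑ x ∈ N, t x :=
    calc -(B * W x₀) ≤ -((∑ x ∈ N, a x) * W x₀) := by
          refine neg_le_neg (mul_le_mul_of_nonneg_right (le_trans ?_ hB) (hW x₀ hx₀S))
          exact Finset.sum_le_sum_of_subset_of_nonneg (Finset.filter_subset _ _)
            fun x hx _ => ha x hx
      _ = ∑ x ∈ N, -(a x * W x₀) := by rw [Finset.sum_mul, Finset.sum_neg_distrib]
      _ ≤ ∑ x ∈ N, t x := Finset.sum_le_sum fun x hx => by
          have hxS := (Finset.mem_filter.1 hx).1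
          exact le_trans (neg_le_neg (mul_le_mul_of_nonneg_left (hx₀ x hx) (ha x hxS)))
            (hlow x hxS)
  linarith

theorem _root_.Nat.le_prod_pow {ι : Type*} [Fintype ι] {B : ℕ} {w e : ι → ℕ} (hB : 1 ≤ B)
    {i₀ : ι} (hi₀ : e i₀ ≠ 0) (hw : ∀ i, e i ≠ 0 → B ≤ w i) : B ≤ ∏ i, w i ^ e i :=
  calc B ≤ w i₀ ^ e i₀ := (hw i₀ hi₀).trans (Nat.le_self_pow hi₀ _)
    _ ≤ ∏ i, w i ^ e i := Finset.single_le_prod' (f := fun i => w i ^ e i) (fun i _ => by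
        rcases eq_or_ne (e i) 0 with h | h
        · rw [h, pow_zero]
        · exact Nat.one_le_pow _ _ (hB.trans (hw i h))) (Finset.mem_univ i₀)

theorem _root_.MvPolynomial.coeff_prod_aeval_X {R σ : Type*} [CommSemiring R] [Fintype σ]
    (g : σ → Polynomial R) (γ : σ →₀ ℕ) :
    coeff γ (∏ i, Polynomial.aeval (X i : MvPolynomial σ R) (g i)) = ∏ i, (g i).coeff (γ i) := by
  simp_rw [Polynomial.aeval_eq_sum_range, Finset.prod_univ_sum, coeff_sum, smul_eq_C_mul,
    Finset.prod_mul_distrib, ← map_prod, coeff_C_mul, coeff_prod_X_pow]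
  have hind (x : σ → ℕ) : γ = Finsupp.indicator Finset.univ (fun i _ => x i) ↔ x = γ := by
    simp [Finsupp.ext_iff, eq_comm, funext_iff]
  simp_rw [hind, mul_ite, mul_one, mul_zero, Finset.sum_ite_eq']
  split_ifs with hγ
  · rfl
  · obtain ⟨i, hi⟩ : ∃ i, (g i).natDegree < γ i := by
      simpa [Fintype.mem_piFinset, Nat.lt_succ_iff] using hγ
    exact (Finset.prod_eq_zero (Finset.mem_univ i)
      (Polynomial.coeff_eq_zero_of_natDegree_lt hi)).symm

theorem _root_.MvPolynomial.coeff_bind₁_aeval_X {R σ : Type*} [CommSemiring R] [Fintype σ]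
    (g : σ → Polynomial R) (Q : MvPolynomial σ R) (γ : σ →₀ ℕ) :
    coeff γ (bind₁ (fun i => Polynomial.aeval (X i) (g i)) Q) =
      ∑ β ∈ Q.support, Q.coeff β * ∏ i, ((g i) ^ (β i)).coeff (γ i) := by
  conv_lhs => rw [Q.as_sum]
  rw [map_sum, coeff_sum]
  refine Finset.sum_congr rfl fun β _ => ?_
  rw [bind₁_monomial, coeff_C_mul, ← Finsupp.prod, Finsupp.prod_fintype _ _ fun _ => pow_zero _]
  simp_rw [← map_pow, coeff_prod_aeval_X]

variable {k : ℕ}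

noncomputable def substPoly (ν : Fin k → Option ℕ) (K : ℕ) (i : Fin k) : Polynomial ℤ :=
  (ν i).elim (Polynomial.X + Polynomial.C (K : ℤ)) fun n => Polynomial.C (n : ℤ)

theorem translate_restrict_eq_bind₁ (ν : Fin k → Option ℕ) (K : ℕ) (Q : MvPolynomial (Fin k) ℤ) :
    translate K (restrict ν Q) = bind₁ (fun i => Polynomial.aeval (X i) (substPoly ν K i)) Q := by
  rw [translate, restrict, bind₁_bind₁]
  refine congrArg (bind₁ · Q) (funext fun i => ?_)
  cases hν : ν i <;> simp [substPoly, hν]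

theorem coeff_substPoly_pow {ν : Fin k → Option ℕ} (K : ℕ) {i : Fin k} {t : ℕ}
    (h : t ≠ 0 → ν i = none) (b : ℕ) :
    ((substPoly ν K i) ^ b).coeff t = b.choose t * ((ν i).getD K : ℤ) ^ (b - t) := by
  cases hν : ν i with
  | none =>
    simp only [substPoly, hν, Option.elim, Polynomial.coeff_X_add_C_pow, Option.getD_none]
    ring
  | some n =>
    obtain rfl : t = 0 := by simpa [hν] using mt h
    simp only [substPoly, hν, Option.elim, ← Polynomial.C_pow, Polynomial.coeff_C_zero]
    simp

theorem coeff_substPoly_pow_eq_zero {ν : Fin k → Option ℕ} (K : ℕ) {i : Fin k} {t : ℕ}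
    (ht : t ≠ 0) (h : ν i ≠ none) (b : ℕ) : ((substPoly ν K i) ^ b).coeff t = 0 := by
  obtain ⟨n, hn⟩ := Option.ne_none_iff_exists'.mp h
  simp only [substPoly, hn, Option.elim, ← Polynomial.C_pow, Polynomial.coeff_C, if_neg ht]

theorem coeff_translate_restrict (ν : Fin k → Option ℕ) (K : ℕ) (Q : MvPolynomial (Fin k) ℤ)
    {γ : Fin k →₀ ℕ} (hγ : ∀ i, γ i ≠ 0 → ν i = none) :
    coeff γ (translate K (restrict ν Q)) =
      ∑ β ∈ Q.support with γ ≤ β, Q.coeff β *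
        (((∏ i, (β i).choose (γ i)) * ∏ i, ((ν i).getD K) ^ (β i - γ i) : ℕ) : ℤ) := by
  rw [translate_restrict_eq_bind₁, coeff_bind₁_aeval_X, Finset.sum_filter]
  refine Finset.sum_congr rfl fun β _ => ?_
  simp_rw [coeff_substPoly_pow K (hγ _)]
  split_ifs with hle
  · push_cast
    rw [Finset.prod_mul_distrib]
  · obtain ⟨i, hi⟩ : ∃ i, β i < γ i := by simpa [Finsupp.le_def] using hle
    rw [Finset.prod_eq_zero (Finset.mem_univ i) (by simp [Nat.choose_eq_zero_of_lt hi]), mul_zero]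

theorem coeff_translate_restrict_eq_zero {ν : Fin k → Option ℕ} (K : ℕ)
    (Q : MvPolynomial (Fin k) ℤ) {γ : Fin k →₀ ℕ} {i : Fin k} (hγ : γ i ≠ 0) (hν : ν i ≠ none) :
    coeff γ (translate K (restrict ν Q)) = 0 := by
  rw [translate_restrict_eq_bind₁, coeff_bind₁_aeval_X]
  exact Finset.sum_eq_zero fun β _ => by
    rw [Finset.prod_eq_zero (Finset.mem_univ i) (coeff_substPoly_pow_eq_zero K hγ hν _), mul_zero]

theorem restrict_none (Q : MvPolynomial (Fin k) ℤ) : restrict (fun _ => none) Q = Q := by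
  simp [restrict, bind₁_X_left]

theorem coeff_translate_of_maxMonomial (K : ℕ) {Q : MvPolynomial (Fin k) ℤ} {α : Fin k →₀ ℕ}
    (h : MaxMonomial Q α) : (translate K Q).coeff α = Q.coeff α := by
  have hsingle : Q.support.filter (α ≤ ·) = {α} :=
    Finset.eq_singleton_iff_unique_mem.2
      ⟨Finset.mem_filter.2 ⟨h.1, le_rfl⟩, fun β hβ => h.2 β (Finset.mem_filter.1 hβ).1
        (Finset.mem_filter.1 hβ).2⟩
  conv_lhs => rw [← restrict_none Q]
  rw [coeff_translate_restrict _ K Q fun _ _ => rfl, hsingle, Finset.sum_singleton]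
  simp

theorem _root_.Finsupp.prod_choose_le_two_pow_degree {σ : Type*} [Fintype σ] (β γ : σ →₀ ℕ) :
    ∏ i, (β i).choose (γ i) ≤ 2 ^ β.degree := by
  rw [Finsupp.degree_eq_sum, ← Finset.prod_pow_eq_pow_sum]
  exact Finset.prod_le_prod' fun i _ => Nat.choose_le_two_pow _ _

theorem _root_.Finsupp.prod_pow_sub_eq_mul {σ M : Type*} [Fintype σ] [CommMonoid M]
    {γ β β' : σ →₀ ℕ} (hγβ : γ ≤ β) (hββ' : β ≤ β') (w : σ → M) :
    ∏ i, w i ^ (β' i - γ i) = (∏ i, w i ^ (β i - γ i)) * ∏ i, w i ^ (β' i - β i) := by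
  rw [← Finset.prod_mul_distrib]
  refine Finset.prod_congr rfl fun i _ => ?_
  rw [← pow_add]
  congr 1
  have := hγβ i
  have := hββ' i
  omega

noncomputable def coeffBound (Q : MvPolynomial (Fin k) ℤ) : ℕ :=
  ∑ β ∈ Q.support, (Q.coeff β).natAbs * 2 ^ β.degree

theorem one_le_coeffBound {Q : MvPolynomial (Fin k) ℤ} {β : Fin k →₀ ℕ} (hβ : β ∈ Q.support) :
    1 ≤ coeffBound Q :=
  calc 1 ≤ (Q.coeff β).natAbs * 2 ^ β.degree :=
        Nat.one_le_iff_ne_zero.2 (mul_ne_zero (Int.natAbs_ne_zero.2 (mem_support_iff.1 hβ))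
          (pow_ne_zero _ two_ne_zero))
    _ ≤ coeffBound Q := Finset.single_le_sum (f := fun β => (Q.coeff β).natAbs * 2 ^ β.degree)
        (fun _ _ => Nat.zero_le _) hβ

theorem coeffBound_mul_prod_pow_le {Q : MvPolynomial (Fin k) ℤ} {w : Fin k → ℕ}
    (hw : ∀ i ∈ Q.vars, coeffBound Q ≤ w i) {γ β β' : Fin k →₀ ℕ} (hγβ : γ ≤ β) (hlt : β < β')
    (hβ' : β' ∈ Q.support) :
    coeffBound Q * ∏ i, w i ^ (β i - γ i) ≤ ∏ i, w i ^ (β' i - γ i) := by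
  obtain ⟨i₀, hi₀⟩ := (Finsupp.lt_def.1 hlt).2
  have hgrow : coeffBound Q ≤ ∏ i, w i ^ (β' i - β i) :=
    Nat.le_prod_pow (one_le_coeffBound hβ') (i₀ := i₀) (by omega) fun i hi =>
      hw i ((mem_vars_iff_mem_support i).2 ⟨β', hβ', Finsupp.mem_support_iff.2 (by omega)⟩)
  rw [Finsupp.prod_pow_sub_eq_mul hγβ hlt.le w, mul_comm]
  exact Nat.mul_le_mul_left _ hgrow

theorem maxMonomial_of_maximal_filter_le {Q : MvPolynomial (Fin k) ℤ} {γ β : Fin k →₀ ℕ}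
    (hβ : Maximal (· ∈ Q.support.filter (γ ≤ ·)) β) : MaxMonomial Q β := by
  obtain ⟨hβQ, hγβ⟩ := Finset.mem_filter.1 hβ.1
  exact ⟨hβQ, fun β' hβ' hle =>
    le_antisymm (hβ.2 (Finset.mem_filter.2 ⟨hβ', hγβ.trans hle⟩) hle) hle⟩

theorem coeff_translate_restrict_nonneg_of_large (Q : MvPolynomial (Fin k) ℤ)
    (hQ : ∀ α, MaxMonomial Q α → 0 ≤ Q.coeff α) {K : ℕ} (hK : coeffBound Q ≤ K)
    {ν : Fin k → Option ℕ} (hν : ∀ i ∈ Q.vars, ∀ n, ν i = some n → coeffBound Q ≤ n)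
    (γ : Fin k →₀ ℕ) : 0 ≤ coeff γ (translate K (restrict ν Q)) := by
  by_cases hγ : ∀ i, γ i ≠ 0 → ν i = none
  swap
  · push Not at hγ
    obtain ⟨i, hγi, hνi⟩ := hγ
    rw [coeff_translate_restrict_eq_zero K Q hγi hνi]
  rw [coeff_translate_restrict ν K Q hγ]
  set w : Fin k → ℕ := fun i => (ν i).getD K
  have hw : ∀ i ∈ Q.vars, coeffBound Q ≤ w i := fun i hi => by
    cases hνi : ν i with
    | none => simpa [w, hνi] using hK
    | some n => simpa [w, hνi] using hν i hi n hνi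
  set U := Q.support.filter (γ ≤ ·)
  refine Finset.sum_nonneg_of_maximal_dominant U _ (fun β => ((∏ i, w i ^ (β i - γ i) : ℕ) : ℤ))
    (fun β => |Q.coeff β| * 2 ^ β.degree) (coeffBound Q) (fun _ _ => by positivity)
    (fun _ _ => by positivity) ?sum ?max ?lt ?low
  case sum =>
    calc ∑ β ∈ U, |Q.coeff β| * 2 ^ β.degree ≤ ∑ β ∈ Q.support, |Q.coeff β| * 2 ^ β.degree :=
          Finset.sum_le_sum_of_subset_of_nonneg (Finset.filter_subset _ _)
            fun _ _ _ => by positivity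
      _ = coeffBound Q := by simp [coeffBound]
  case max =>
    intro β hβ
    obtain ⟨hβQ, hγβ⟩ := Finset.mem_filter.1 hβ.1
    have hcoeff : 1 ≤ Q.coeff β :=
      lt_of_le_of_ne (hQ β (maxMonomial_of_maximal_filter_le hβ)) (mem_support_iff.1 hβQ).symm
    have hchoose : 1 ≤ ∏ i, (β i).choose (γ i) :=
      Finset.one_le_prod' fun i _ => Nat.choose_pos (hγβ i)
    calc ((∏ i, w i ^ (β i - γ i) : ℕ) : ℤ)
        ≤ (((∏ i, (β i).choose (γ i)) * ∏ i, w i ^ (β i - γ i) : ℕ) : ℤ) := by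
          exact_mod_cast Nat.le_mul_of_pos_left _ hchoose
      _ ≤ _ := le_mul_of_one_le_left (by positivity) hcoeff
  case lt =>
    intro β hβ β' hβ' hlt
    exact_mod_cast coeffBound_mul_prod_pow_le hw (Finset.mem_filter.1 hβ).2 hlt
      (Finset.mem_filter.1 hβ').1
  case low =>
    intro β _
    have hchoose : ((∏ i, (β i).choose (γ i) : ℕ) : ℤ) ≤ 2 ^ β.degree := by
      exact_mod_cast Finsupp.prod_choose_le_two_pow_degree β γ
    refine le_trans (neg_le_neg ?_) (neg_abs_le _)
    rw [abs_mul, Nat.abs_cast, Nat.cast_mul, mul_assoc]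
    gcongr

theorem restrict_restrict (ν ν' : Fin k → Option ℕ) (Q : MvPolynomial (Fin k) ℤ) :
    restrict ν (restrict ν' Q) = restrict (fun i => (ν' i).or (ν i)) Q := by
  rw [restrict, restrict, restrict, bind₁_bind₁]
  refine congrArg (bind₁ · Q) (funext fun i => ?_)
  cases ν' i <;> simp

theorem vars_restrict_subset (ν : Fin k → Option ℕ) (Q : MvPolynomial (Fin k) ℤ) :
    (restrict ν Q).vars ⊆ Q.vars.filter (ν · = none) := by
  refine (vars_bind₁ _ _).trans fun x hx => ?_
  obtain ⟨i, hi, hx⟩ := Finset.mem_biUnion.1 hx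
  cases hνi : ν i with
  | none =>
    obtain rfl : x = i := by simpa [hνi] using hx
    exact Finset.mem_filter.2 ⟨hi, hνi⟩
  | some n => simp only [hνi, Option.elim, vars_C, Finset.notMem_empty] at hx

def PolyStrNNegUpTo (K : ℕ) (Q : MvPolynomial (Fin k) ℤ) : Prop :=
  ∀ ν : Fin k → Option ℕ, (∀ i n, ν i = some n → n ≤ K) →
    ∀ α, MaxMonomial (restrict ν Q) α → 0 ≤ (restrict ν Q).coeff α

theorem PolyStrNNegUpTo.maxMonomial_nonneg {K : ℕ} {Q : MvPolynomial (Fin k) ℤ}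
    (hQ : PolyStrNNegUpTo K Q) {α : Fin k →₀ ℕ} (hα : MaxMonomial Q α) : 0 ≤ Q.coeff α := by
  simpa [restrict_none] using hQ (fun _ => none) (by simp) α (by rwa [restrict_none])

theorem PolyStrNNegUpTo.restrict_update {K : ℕ} {Q : MvPolynomial (Fin k) ℤ}
    (hQ : PolyStrNNegUpTo K Q) (j : Fin k) {n : ℕ} (hn : n ≤ K) :
    PolyStrNNegUpTo K (restrict (Function.update (fun _ => none) j (some n)) Q) := by
  intro ν hν
  rw [restrict_restrict]
  refine hQ _ fun i n' hi => ?_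
  by_cases hij : i = j
  · subst hij
    simp_all
  · simp only [Function.update_of_ne hij, Option.none_or] at hi
    exact hν i n' hi

noncomputable def translationBound : ℕ → MvPolynomial (Fin k) ℤ → ℕ
  | 0, Q => coeffBound Q
  | m + 1, Q => max (coeffBound Q) ((Finset.univ ×ˢ Finset.range (coeffBound Q)).sup fun p =>
      translationBound m (restrict (Function.update (fun _ => none) p.1 (some p.2)) Q))

theorem coeff_translate_restrict_nonneg (m : ℕ) {Q : MvPolynomial (Fin k) ℤ}
    (hm : Q.vars.card ≤ m) {K : ℕ} (hK : translationBound m Q ≤ K) (hQ : PolyStrNNegUpTo K Q)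
    (ν : Fin k → Option ℕ) (γ : Fin k →₀ ℕ) : 0 ≤ coeff γ (translate K (restrict ν Q)) := by
  induction m generalizing Q with
  | zero =>
    refine coeff_translate_restrict_nonneg_of_large Q (fun _ => hQ.maxMonomial_nonneg) hK
      (fun i hi => ?_) γ
    simp [Finset.card_eq_zero.1 (Nat.le_zero.1 hm)] at hi
  | succ m ih =>
    rw [translationBound] at hK
    have hBK : coeffBound Q ≤ K := (le_max_left _ _).trans hK
    by_cases hsmall : ∃ j ∈ Q.vars, ∃ n, ν j = some n ∧ n < coeffBound Q
    · obtain ⟨j, hj, n, hνj, hn⟩ := hsmall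
      set νj := Function.update (fun _ => none) j (some n)
      have hν : (fun i => (νj i).or (ν i)) = ν := funext fun i => by
        by_cases hij : i = j
        · subst hij; simp [νj, hνj]
        · simp [νj, hij]
      rw [← hν, ← restrict_restrict]
      refine ih ?_ ?_ (hQ.restrict_update j (hn.le.trans hBK))
      · have hsub : (restrict νj Q).vars ⊆ Q.vars.erase j :=
          (vars_restrict_subset νj Q).trans fun i hi => by
            obtain ⟨hiQ, hinone⟩ := Finset.mem_filter.1 hi
            exact Finset.mem_erase.2 ⟨by rintro rfl; simp [νj] at hinone, hiQ⟩
        have := Finset.card_le_card hsub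
        rw [Finset.card_erase_of_mem hj] at this
        omega
      · have hmem : (j, n) ∈ Finset.univ ×ˢ Finset.range (coeffBound Q) :=
          Finset.mem_product.2 ⟨Finset.mem_univ j, Finset.mem_range.2 hn⟩
        exact (Finset.le_sup (f := fun p : Fin k × ℕ => translationBound m
          (restrict (Function.update (fun _ => none) p.1 (some p.2)) Q)) hmem).trans
          ((le_max_right _ _).trans hK)
    · push Not at hsmall
      exact coeff_translate_restrict_nonneg_of_large Q (fun _ => hQ.maxMonomial_nonneg) hBK
        hsmall γ

end

/-- there is a computable `K` such that `P ∈ PolyStrNNeg` iff all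
translated partial evaluations `τ_K(P|ν)` lie in `ℕ[X₁,…,X_k]`, and it
suffices to consider partial assignments with values in `{0,…,K}`. -/
theorem statement6 {k : ℕ} (P : MvPolynomial (Fin k) ℤ) :
    ∃ K : ℕ,
      (PolyStrNNeg P ↔
        ∀ ν : Fin k → Option ℕ, ∀ α : Fin k →₀ ℕ,
          0 ≤ (translate K (restrict ν P)).coeff α) ∧
      (PolyStrNNeg P ↔
        ∀ ν : Fin k → Option ℕ, (∀ i n, ν i = some n → n ≤ K) →
          ∀ α : Fin k →₀ ℕ, 0 ≤ (translate K (restrict ν P)).coeff α) := by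
  set K := translationBound k P
  have hnonneg : PolyStrNNegUpTo K P → ∀ ν α, 0 ≤ (translate K (restrict ν P)).coeff α :=
    coeff_translate_restrict_nonneg k ((Finset.card_le_univ _).trans_eq (Fintype.card_fin k))
      le_rfl
  have hupTo : PolyStrNNeg P → PolyStrNNegUpTo K P := fun h ν _ => h ν
  have hmax : (∀ ν α, 0 ≤ (translate K (restrict ν P)).coeff α) → PolyStrNNeg P :=
    fun h ν α hα => coeff_translate_of_maxMonomial K hα ▸ h ν α
  have hmaxUpTo : (∀ ν : Fin k → Option ℕ, (∀ i n, ν i = some n → n ≤ K) →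
      ∀ α, 0 ≤ (translate K (restrict ν P)).coeff α) → PolyStrNNegUpTo K P :=
    fun h ν hν α hα => coeff_translate_of_maxMonomial K hα ▸ h ν hν α
  exact ⟨K, ⟨fun h => hnonneg (hupTo h), hmax⟩,
    ⟨fun h ν _ => hnonneg (hupTo h) ν, fun h => hmax (hnonneg (hmaxUpTo h))⟩⟩

end NRatSeries
end

section
/- Let f : Σ* → ℤ be a ℤ-polyregular function of degree at most 1 such that f(w) ≥ 0 for every word w ∈ Σ*. Then f is ℕ-polyregular of degree at most 1. -/
open scoped BigOperators Classical

namespace NRatSeries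

/-! ### Auxiliary material for `statement18` -/

section Statement18Aux

variable {A : Type} {M : Type} [Monoid M]

theorem splits_nil : splits ([] : List A) = [([], [])] := rfl

theorem splits_cons (a : A) (v : List A) :
    splits (a :: v) = ([], a :: v) :: (splits v).map (fun p => (a :: p.1, p.2)) := by
  unfold splits
  rw [show (a :: v).length + 1 = (v.length + 1) + 1 from rfl, List.range_succ_eq_map]
  simp [List.map_map, Function.comp]

theorem decomps_one_aux (v : List A) :
    ∀ h : List A → List A,
      (splits v).flatMap (fun p => (decomps 0 p.2).map (fun l => h p.1 :: l)) = [[h v]] := by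
  induction v with
  | nil => intro h; rfl
  | cons a v ih =>
      intro h
      rw [splits_cons]
      simp only [List.flatMap_cons, List.flatMap_map]
      have h0 : decomps 0 (a :: v) = [] := rfl
      rw [h0]
      simpa using ih (fun l => h (a :: l))

theorem flatMap_singleton_map {α β : Type} (l : List α) (F : α → β) :
    (l.flatMap fun x => [F x]) = l.map F := by
  induction l with
  | nil => rfl
  | cons a l ih => simp [List.flatMap_cons, ih]

theorem decomps_two (w : List A) :
    decomps (1 + 1) w = (splits w).map (fun p => [p.1, p.2]) := by
  show (splits w).flatMap (fun p => (decomps 1 p.2).map (fun l => p.1 :: l)) = _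
  have h1 : ∀ v : List A, decomps 1 v = [[v]] := by
    intro v
    show (splits v).flatMap (fun p => (decomps 0 p.2).map (fun l => p.1 :: l)) = _
    simpa using decomps_one_aux v id
  simp only [h1, List.map_cons, List.map_nil]
  exact flatMap_singleton_map _ _

/-- Sum of `π₂` over all splits of `v`, with prefix context `m`. -/
def Ssum (μ : List A → M) (π2 : M → M → ℤ) (m : M) (v : List A) : ℤ :=
  ((splits v).map (fun p => π2 (m * μ p.1) (μ p.2))).sum

/-- Sum of `π₂` over all splits of `u`, with prefix context `m` and suffix context `s`. -/
def Tsum (μ : List A → M) (π2 : M → M → ℤ) (m : M) (u : List A) (s : M) : ℤ :=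
  ((splits u).map (fun p => π2 (m * μ p.1) (μ p.2 * s))).sum

variable (μ : List A → M) (π2 : M → M → ℤ)

theorem Ssum_nil (hnil : μ [] = 1) (m : M) : Ssum μ π2 m [] = π2 m 1 := by
  simp [Ssum, splits_nil, hnil]

theorem Ssum_cons (hnil : μ [] = 1) (happ : ∀ u v : List A, μ (u ++ v) = μ u * μ v)
    (m : M) (a : A) (v : List A) :
    Ssum μ π2 m (a :: v) = π2 m (μ (a :: v)) + Ssum μ π2 (m * μ [a]) v := by
  unfold Ssum
  rw [splits_cons]
  simp only [List.map_cons, List.sum_cons, List.map_map]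
  congr 1
  · rw [hnil, mul_one]
  · apply congrArg List.sum
    apply List.map_congr_left
    intro p _
    have h : μ (a :: p.1) = μ [a] * μ p.1 := happ [a] p.1
    simp [Function.comp, h, mul_assoc]

theorem Tsum_nil (hnil : μ [] = 1) (m s : M) : Tsum μ π2 m [] s = π2 m s := by
  simp [Tsum, splits_nil, hnil]

theorem Tsum_cons (hnil : μ [] = 1) (happ : ∀ u v : List A, μ (u ++ v) = μ u * μ v)
    (m : M) (a : A) (u : List A) (s : M) :
    Tsum μ π2 m (a :: u) s = π2 m (μ (a :: u) * s) + Tsum μ π2 (m * μ [a]) u s := by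
  unfold Tsum
  rw [splits_cons]
  simp only [List.map_cons, List.sum_cons, List.map_map]
  congr 1
  · rw [hnil, mul_one]
  · apply congrArg List.sum
    apply List.map_congr_left
    intro p _
    have h : μ (a :: p.1) = μ [a] * μ p.1 := happ [a] p.1
    simp [Function.comp, h, mul_assoc]

theorem Ssum_append (hnil : μ [] = 1) (happ : ∀ u v : List A, μ (u ++ v) = μ u * μ v)
    (u : List A) : ∀ (m : M) (v : List A),
    Ssum μ π2 m (u ++ v) = Tsum μ π2 m u (μ v) + Ssum μ π2 (m * μ u) v - π2 (m * μ u) (μ v) := by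
  induction u with
  | nil =>
      intro m v
      simp only [List.nil_append, Tsum_nil μ π2 hnil, hnil, mul_one]
      ring
  | cons a u ih =>
      intro m v
      have h1 : μ (a :: u) = μ [a] * μ u := happ [a] u
      have h2 : μ (a :: (u ++ v)) = μ (a :: u) * μ v := by
        have := happ (a :: u) v
        simpa using this
      rw [show (a :: u) ++ v = a :: (u ++ v) from rfl,
        Ssum_cons μ π2 hnil happ, ih (m * μ [a]) v,
        Tsum_cons μ π2 hnil happ, h2, h1, mul_assoc,
        ← mul_assoc m (μ [a]) (μ u)]
      ring

/-- The condition under which `psi` is defined via a least element. -/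
def PsiCond (m s : M) : Prop :=
  (∃ z : ℤ, ∃ v, μ v = s ∧ z = Ssum μ π2 m v) ∧
    (∃ b : ℤ, ∀ z : ℤ, (∃ v, μ v = s ∧ z = Ssum μ π2 m v) → b ≤ z)

/-- The potential function: least value of `Ssum m v` over `v` with `μ v = s`. -/
noncomputable def psi (m s : M) : ℤ :=
  if h : PsiCond μ π2 m s then (Int.exists_least_of_bdd h.2 h.1).choose else 0

theorem psi_spec (m s : M) (h : PsiCond μ π2 m s) :
    (∃ v, μ v = s ∧ psi μ π2 m s = Ssum μ π2 m v) ∧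
      ∀ v, μ v = s → psi μ π2 m s ≤ Ssum μ π2 m v := by
  unfold psi
  rw [dif_pos h]
  obtain ⟨h1, h2⟩ := (Int.exists_least_of_bdd h.2 h.1).choose_spec
  exact ⟨h1, fun v hv => h2 _ ⟨v, hv, rfl⟩⟩

theorem psi_cond (hnil : μ [] = 1) (happ : ∀ u v : List A, μ (u ++ v) = μ u * μ v)
    (hnn : ∀ v, 0 ≤ Ssum μ π2 1 v) (u₀ : List A) (s : M) (hs : ∃ v, μ v = s) :
    PsiCond μ π2 (μ u₀) s := by
  obtain ⟨v₀, hv₀⟩ := hs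
  refine ⟨⟨_, v₀, hv₀, rfl⟩, ⟨π2 (μ u₀) s - Tsum μ π2 1 u₀ s, ?_⟩⟩
  rintro z ⟨v, hv, rfl⟩
  have h := Ssum_append μ π2 hnil happ u₀ 1 v
  rw [one_mul, hv] at h
  have h0 := hnn (u₀ ++ v)
  rw [h] at h0
  linarith

theorem psi_nonneg (hnil : μ [] = 1) (happ : ∀ u v : List A, μ (u ++ v) = μ u * μ v)
    (hnn : ∀ v, 0 ≤ Ssum μ π2 1 v) (s : M) (hs : ∃ v, μ v = s) :
    0 ≤ psi μ π2 1 s := by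
  have hc : PsiCond μ π2 1 s := by
    have := psi_cond μ π2 hnil happ hnn [] s hs
    rwa [hnil] at this
  obtain ⟨v, _, he⟩ := (psi_spec μ π2 1 s hc).1
  rw [he]
  exact hnn v

theorem psi_sink (hnil : μ [] = 1) (happ : ∀ u v : List A, μ (u ++ v) = μ u * μ v)
    (hnn : ∀ v, 0 ≤ Ssum μ π2 1 v) (m : M) (hm : ∃ u, μ u = m) :
    psi μ π2 m 1 ≤ π2 m 1 := by
  obtain ⟨u, hu⟩ := hm
  have hc : PsiCond μ π2 m 1 := by
    have := psi_cond μ π2 hnil happ hnn u 1 ⟨[], hnil⟩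
    rwa [hu] at this
  have h := (psi_spec μ π2 m 1 hc).2 [] hnil
  rwa [Ssum_nil μ π2 hnil] at h

theorem psi_edge (hnil : μ [] = 1) (happ : ∀ u v : List A, μ (u ++ v) = μ u * μ v)
    (hnn : ∀ v, 0 ≤ Ssum μ π2 1 v) (m : M) (a : A) (v' : List A) (hm : ∃ u, μ u = m) :
    psi μ π2 m (μ (a :: v')) ≤ π2 m (μ (a :: v')) + psi μ π2 (m * μ [a]) (μ v') := by
  obtain ⟨u, hu⟩ := hm
  have hc2 : PsiCond μ π2 (m * μ [a]) (μ v') := by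
    have := psi_cond μ π2 hnil happ hnn (u ++ [a]) (μ v') ⟨v', rfl⟩
    rwa [happ, hu] at this
  obtain ⟨t, ht, he⟩ := (psi_spec μ π2 _ _ hc2).1
  have hc1 : PsiCond μ π2 m (μ (a :: v')) := by
    have := psi_cond μ π2 hnil happ hnn u (μ (a :: v')) ⟨a :: v', rfl⟩
    rwa [hu] at this
  have hat : μ (a :: t) = μ (a :: v') := by
    have h1 : μ (a :: t) = μ [a] * μ t := happ [a] t
    have h2 : μ (a :: v') = μ [a] * μ v' := happ [a] v'
    rw [h1, h2, ht]
  have hle := (psi_spec μ π2 m (μ (a :: v')) hc1).2 (a :: t) hat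
  rw [Ssum_cons μ π2 hnil happ, hat, ← he] at hle
  linarith

/-! ### The extended monoid tracking the first letter -/

/-- Multiplication on `M × Option (A × M)` where the second component records
the first letter and the image of the remaining suffix. -/
def extMul (x y : M × Option (A × M)) : M × Option (A × M) :=
  (x.1 * y.1, x.2.elim y.2 (fun p => some (p.1, p.2 * y.1)))

/-- The extended monoid structure. -/
def extMonoid (A M : Type) [Monoid M] : Monoid (M × Option (A × M)) where
  mul := extMul
  one := (1, none)
  mul_assoc := by
    rintro ⟨m, o⟩ ⟨m', o'⟩ ⟨m'', o''⟩
    show extMul (extMul _ _) _ = extMul _ (extMul _ _)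
    cases o <;> cases o' <;> simp [extMul, mul_assoc]
  one_mul := by
    rintro ⟨m, o⟩
    show extMul ((1 : M), (none : Option (A × M))) _ = _
    simp [extMul]
  mul_one := by
    rintro ⟨m, o⟩
    show extMul _ ((1 : M), (none : Option (A × M))) = _
    cases o <;> simp [extMul]

/-- The extended morphism. -/
def nu (μ : List A → M) : List A → M × Option (A × M)
  | [] => (μ [], none)
  | a :: t => (μ (a :: t), some (a, μ t))

theorem nu_fst (w : List A) : (nu μ w).1 = μ w := by cases w <;> rfl

theorem nu_nil (hnil : μ [] = 1) : nu μ [] = ((1 : M), (none : Option (A × M))) := by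
  simp [nu, hnil]

theorem nu_append (happ : ∀ u v : List A, μ (u ++ v) = μ u * μ v) (u v : List A) :
    nu μ (u ++ v) = extMul (nu μ u) (nu μ v) := by
  have h1 : (nu μ (u ++ v)).1 = (extMul (nu μ u) (nu μ v)).1 := by
    show (nu μ (u ++ v)).1 = (nu μ u).1 * (nu μ v).1
    rw [nu_fst, nu_fst, nu_fst]
    exact happ u v
  have h2 : (nu μ (u ++ v)).2 = (extMul (nu μ u) (nu μ v)).2 := by
    cases u with
    | nil => rfl
    | cons a u' =>
        show some (a, μ (u' ++ v)) = some (a, μ u' * (nu μ v).1)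
        rw [nu_fst, happ]
  exact Prod.ext_iff.2 ⟨h1, h2⟩

/-! ### The adjusted production functions -/

/-- The telescoped production function. -/
noncomputable def gfun (x y : M × Option (A × M)) : ℤ :=
  π2 x.1 y.1 - psi μ π2 x.1 y.1 + Option.elim y.2 0 (fun p => psi μ π2 (x.1 * μ [p.1]) p.2)

/-- The source-correction term. -/
noncomputable def srcfun (x y : M × Option (A × M)) : ℤ :=
  if x.2 = none then psi μ π2 1 (x.1 * y.1) else 0

/-- The new production function. -/
noncomputable def phi (x y : M × Option (A × M)) : ℤ :=
  if (∃ u, nu μ u = x) ∧ (∃ v, nu μ v = y) then gfun μ π2 x y + srcfun μ π2 x y else 0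

theorem phi_reach (u v : List A) :
    phi μ π2 (nu μ u) (nu μ v) =
      gfun μ π2 (nu μ u) (nu μ v) + srcfun μ π2 (nu μ u) (nu μ v) := by
  unfold phi
  rw [if_pos ⟨⟨u, rfl⟩, ⟨v, rfl⟩⟩]

theorem sum_map_add {α : Type} (l : List α) (F G : α → ℤ) :
    (l.map (fun x => F x + G x)).sum = (l.map F).sum + (l.map G).sum := by
  induction l with
  | nil => simp
  | cons a l ih => simp only [List.map_cons, List.sum_cons, ih]; ring

theorem tele (hnil : μ [] = 1) (happ : ∀ u v : List A, μ (u ++ v) = μ u * μ v) :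
    ∀ (v u₁ : List A),
      ((splits v).map (fun p => gfun μ π2 (nu μ (u₁ ++ p.1)) (nu μ p.2))).sum
        = Ssum μ π2 (μ u₁) v - psi μ π2 (μ u₁) (μ v) := by
  intro v
  induction v with
  | nil =>
      intro u₁
      simp only [splits_nil, List.map_cons, List.map_nil, List.sum_cons, List.sum_nil,
        List.append_nil, add_zero]
      have e1 : (nu μ []).1 = (1 : M) := by rw [nu_fst, hnil]
      have e2 : (nu μ []).2 = (none : Option (A × M)) := rfl
      rw [Ssum_nil μ π2 hnil, hnil]
      unfold gfun
      rw [e1, e2, nu_fst]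
      simp [Option.elim]
  | cons a v' ih =>
      intro u₁
      rw [splits_cons]
      simp only [List.map_cons, List.sum_cons, List.map_map]
      have hmap : ((splits v').map ((fun p => gfun μ π2 (nu μ (u₁ ++ p.1)) (nu μ p.2)) ∘
          (fun p : List A × List A => (a :: p.1, p.2)))).sum
          = Ssum μ π2 (μ (u₁ ++ [a])) v' - psi μ π2 (μ (u₁ ++ [a])) (μ v') := by
        rw [← ih (u₁ ++ [a])]
        apply congrArg List.sum
        apply List.map_congr_left
        intro p _
        have : u₁ ++ (a :: p.1) = (u₁ ++ [a]) ++ p.1 := by simp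
        simp only [Function.comp]
        rw [this]
      rw [hmap]
      have hhead : gfun μ π2 (nu μ (u₁ ++ [])) (nu μ (a :: v'))
          = π2 (μ u₁) (μ (a :: v')) - psi μ π2 (μ u₁) (μ (a :: v'))
            + psi μ π2 (μ u₁ * μ [a]) (μ v') := by
        rw [List.append_nil]
        have e1 : (nu μ (a :: v')).1 = μ (a :: v') := rfl
        have e2 : (nu μ (a :: v')).2 = some (a, μ v') := rfl
        unfold gfun
        rw [e1, e2, nu_fst]
        rfl
      rw [hhead, happ u₁ [a], Ssum_cons μ π2 hnil happ]
      ring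

theorem srcsum (hnil : μ [] = 1) (happ : ∀ u v : List A, μ (u ++ v) = μ u * μ v)
    (w : List A) :
    ((splits w).map (fun p => srcfun μ π2 (nu μ p.1) (nu μ p.2))).sum = psi μ π2 1 (μ w) := by
  cases w with
  | nil =>
      simp only [splits_nil, List.map_cons, List.map_nil, List.sum_cons, List.sum_nil]
      simp [srcfun, nu, hnil]
  | cons a w' =>
      rw [splits_cons]
      simp only [List.map_cons, List.sum_cons, List.map_map]
      have hzero : ((splits w').map ((fun p => srcfun μ π2 (nu μ p.1) (nu μ p.2)) ∘
          (fun p : List A × List A => (a :: p.1, p.2)))).sum = 0 := by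
        apply List.sum_eq_zero
        intro x hx
        obtain ⟨p, _, rfl⟩ := List.mem_map.1 hx
        simp [srcfun, nu]
      rw [hzero]
      have : srcfun μ π2 (nu μ []) (nu μ (a :: w')) = psi μ π2 1 (μ (a :: w')) := by
        simp [srcfun, nu, hnil, nu_fst]
      rw [this]
      ring

end Statement18Aux


/-- a ℤ-polyregular function of degree at most 1 taking only
non-negative values is ℕ-polyregular of degree at most 1. -/
theorem statement18 {A : Type} [Fintype A] (f : List A → ℤ)
    (hf : ZPolyD 1 f) (hnn : ∀ w : List A, 0 ≤ f w) :
    NPolyD 1 f := by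
  classical
  obtain ⟨D, hD⟩ := hf
  have hnil : D.μ [] = 1 := D.map_nil
  have happ := D.map_append
  set μ := D.μ with hμ
  set π2 : D.M → D.M → ℤ := fun m s => D.π ![m, s] with hπ2
  have hfS : ∀ w, f w = Ssum μ π2 1 w := by
    intro w
    rw [hD w, decomps_two, List.map_map]
    unfold Ssum
    apply congrArg List.sum
    apply List.map_congr_left
    intro p _
    rw [one_mul]
    show D.π (fun i => D.μ ([p.1, p.2].getD ↑i [])) = D.π ![D.μ p.1, D.μ p.2]
    congr 1
    funext i
    fin_cases i <;> rfl
  have hnnS : ∀ v, 0 ≤ Ssum μ π2 1 v := fun v => hfS v ▸ hnn v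
  refine ⟨{ M := D.M × Option (A × D.M)
            mon := extMonoid A D.M
            fin := inferInstance
            μ := nu μ
            π := fun g => phi μ π2 (g 0) (g 1)
            map_nil := nu_nil μ hnil
            map_append := fun u v => nu_append μ happ u v }, ?_, ?_⟩
  · -- Computes
    intro w
    rw [decomps_two, List.map_map, hfS w]
    have key : ((splits w).map (fun p => gfun μ π2 (nu μ p.1) (nu μ p.2)
        + srcfun μ π2 (nu μ p.1) (nu μ p.2))).sum = Ssum μ π2 1 w := by
      rw [sum_map_add]
      have htele := tele μ π2 hnil happ w []
      simp only [List.nil_append] at htele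
      rw [hnil] at htele
      rw [htele, srcsum μ π2 hnil happ w]
      ring
    rw [← key]
    apply congrArg List.sum
    apply List.map_congr_left
    intro p _
    show gfun μ π2 (nu μ p.1) (nu μ p.2) + srcfun μ π2 (nu μ p.1) (nu μ p.2)
      = phi μ π2 (nu μ p.1) (nu μ p.2)
    exact (phi_reach μ π2 p.1 p.2).symm
  · -- NatOutput
    intro g
    show (0 : ℤ) ≤ phi μ π2 (g 0) (g 1)
    unfold phi
    split_ifs with h
    · obtain ⟨⟨u, hu⟩, ⟨v, hv⟩⟩ := h
      rw [← hu, ← hv]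
      have hsrc : 0 ≤ srcfun μ π2 (nu μ u) (nu μ v) := by
        unfold srcfun
        split_ifs with h2
        · rw [nu_fst, nu_fst]
          exact psi_nonneg μ π2 hnil happ hnnS _ ⟨u ++ v, happ u v⟩
        · exact le_refl 0
      have hg : 0 ≤ gfun μ π2 (nu μ u) (nu μ v) := by
        cases v with
        | nil =>
            have e1 : (nu μ []).1 = (1 : D.M) := by rw [nu_fst, hnil]
            have e2 : (nu μ []).2 = (none : Option (A × D.M)) := rfl
            unfold gfun
            rw [e1, e2, nu_fst]
            simp only [Option.elim]
            have := psi_sink μ π2 hnil happ hnnS (μ u) ⟨u, rfl⟩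
            linarith
        | cons a v' =>
            have e1 : (nu μ (a :: v')).1 = μ (a :: v') := rfl
            have e2 : (nu μ (a :: v')).2 = some (a, μ v') := rfl
            unfold gfun
            rw [e1, e2, nu_fst]
            simp only [Option.elim]
            have := psi_edge μ π2 hnil happ hnnS (μ u) a v' ⟨u, rfl⟩
            linarith
      linarith
    · exact le_refl 0

end NRatSeries
end
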